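/- Let ℓ ≥ 5 be prime. (a) If f ∈ M_{2k} and ord_0(f̄) + ord_∞(f̄) + ord_{1/2}(f̄) > k, then ord_s(f̄) = +∞ for every cusp s and f̄ = 0, i.e. f ≡ 0 (mod ℓ). (b) If f ∈ M_{2k+1} and ord_0(f̄) + ord_∞(f̄) + ord_{1/2}(f̄) > k + 1/2, then ord_s(f̄) = +∞ for every cusp s and f̄ = 0. -/

import Mathlib

open PowerSeries Finset
noncomputable section
namespace Paper

/-- Membership in the local ring `ℤ_(ℓ) = {a/b ∈ ℚ : ℓ ∤ b}`. -/
def inZl (ℓ : ℕ) (x : ℚ) : Prop := ¬ (ℓ ∣ x.den)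

/-- `x ≡ 0 (mod ℓ)` in `ℤ_(ℓ)`, i.e. `x/ℓ ∈ ℤ_(ℓ)`. -/
def congMod (ℓ : ℕ) (x : ℚ) : Prop := inZl ℓ (x / ℓ)

/-- A power series lies in `ℤ_(ℓ)[[q]]`. -/
def ZlSeries (ℓ : ℕ) (f : PowerSeries ℚ) : Prop := ∀ n, inZl ℓ (coeff n f)

/-- Reduction of an element of `ℤ_(ℓ)` modulo ℓ. -/
def red (ℓ : ℕ) (x : ℚ) : ZMod ℓ := (x.num : ZMod ℓ) * (x.den : ZMod ℓ)⁻¹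

/-- Coefficientwise reduction mod ℓ of a power series. -/
def redS (ℓ : ℕ) (f : PowerSeries ℚ) : PowerSeries (ZMod ℓ) :=
  PowerSeries.mk fun n => red ℓ (coeff n f)

/-- The Ramanujan theta operator `Θ = q d/dq`. -/
def Th (f : PowerSeries ℚ) : PowerSeries ℚ := PowerSeries.mk fun n => (n : ℚ) * coeff n f

/-- Atkin's `U_ℓ` operator. -/
def U (ℓ : ℕ) (f : PowerSeries ℚ) : PowerSeries ℚ := PowerSeries.mk fun n => coeff (ℓ * n) f

/-- `θ₀ = ∑_{n ∈ ℤ} q^{n²}`. -/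
def theta0 : PowerSeries ℚ :=
  PowerSeries.mk fun n => if n = 0 then 1 else if (Nat.sqrt n) ^ 2 = n then 2 else 0

def theta0sq : PowerSeries ℚ := theta0 ^ 2

/-- `F = ∑_{n ≥ 0} σ₁(2n+1) q^{2n+1}`. -/
def Fser : PowerSeries ℚ :=
  PowerSeries.mk fun n => if Odd n then (∑ d ∈ n.divisors, (d : ℚ)) else 0

/-- `G = θ₀⁴`. -/
def Gser : PowerSeries ℚ := theta0 ^ 4

/-- `E = η⁸(z)/η⁴(2z) = θ₀⁴ - 16 F`. -/
def Eser : PowerSeries ℚ := Gser - 16 * Fser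

/-- The monomial basis `μ_{k,b} = (θ₀²)^{k-2b} F^b` of `M_k(Γ₁(4))`. -/
def mu (k b : ℕ) : PowerSeries ℚ := theta0sq ^ (k - 2 * b) * Fser ^ b

/-- `M_k(Γ₁(4))` with rational coefficients, realized through `q`-expansions:
the isobaric polynomials in `θ₀² ∈ M₁` and `F ∈ M₂`. -/
def Mk (k : ℕ) : Set (PowerSeries ℚ) :=
  {f | ∃ c : ℕ → ℚ, f = ∑ b ∈ range (k / 2 + 1), c b • mu k b}

/-- The filtration `ω(f) = inf {k' : f̄ ∈ M̄_{k'}}` (with coefficients in `ℤ_(ℓ)`). -/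
def filt (ℓ : ℕ) (f : PowerSeries ℚ) : ℕ :=
  sInf {k | ∃ g ∈ Mk k, ZlSeries ℓ g ∧ redS ℓ g = redS ℓ f}

/-- Coordinates of a weight-`k` form with respect to the basis `μ_{k,b}`. -/
def coords (k : ℕ) (f : PowerSeries ℚ) (b : ℕ) : ℚ :=
  Nat.strongRecOn b fun b ih =>
    coeff b (f - ∑ j ∈ (range b).attach, ih j.1 (mem_range.mp j.2) • mu k j.1)

/-- `∑_{j ≥ 0} u^{j²+j}`. -/
def psiSum : PowerSeries ℚ :=
  PowerSeries.mk fun n => (((range (n + 1)).filter fun j => j ^ 2 + j = n).card : ℚ)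

/-- Expansion of `θ₀²` at the cusp 1/2, in the variable `u = q^{1/2}`: `ψ⁴`. -/
def thetaHalf : PowerSeries ℚ := X * psiSum ^ 4

/-- Substitution `q ↦ u²`. -/
def expand2 (f : PowerSeries ℚ) : PowerSeries ℚ :=
  PowerSeries.mk fun n => if 2 ∣ n then coeff (n / 2) f else 0

/-- Expansion of `F` at the cusp 1/2 in the variable `u = q^{1/2}`: `θ₀⁴`. -/
def FHalf : PowerSeries ℚ := expand2 (theta0 ^ 4)

/-- Expansion of a weight-`k` form at the cusp 1/2, as a series in `u = q^{1/2}`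
(so orders `n/2` at the cusp 1/2 are recorded by `u`-order `n`). -/
def atHalf (k : ℕ) (f : PowerSeries ℚ) : PowerSeries ℚ :=
  ∑ b ∈ range (k / 2 + 1), coords k f b • (thetaHalf ^ (k - 2 * b) * FHalf ^ b)

def invU (m : ℕ) : PowerSeries ℚ := PowerSeries.invOfUnit (1 - X ^ m) 1

/-- `η⁸(z/4)/η⁴(z/2)` in the variable `t = q^{1/4}`. -/
def Hser : PowerSeries ℚ :=
  PowerSeries.mk fun n => coeff n (∏ m ∈ Icc 1 n, ((1 - X ^ m) ^ 8 * invU (2 * m) ^ 4))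

/-- Expansion of a weight-`k` form at the cusp 0, in the variable `t = q^{1/4}`
(after dividing out `i^k`, as in the paper); `θ₀² ↦ (-1/2)·θ₀²(z/4)`, `F ↦ (1/64)·η⁸(z/4)/η⁴(z/2)`. -/
def atZero (k : ℕ) (f : PowerSeries ℚ) : PowerSeries ℚ :=
  ∑ b ∈ range (k / 2 + 1),
    (coords k f b * (-1 / 2 : ℚ) ^ (k - 2 * b) * (1 / 64 : ℚ) ^ b) •
      (theta0sq ^ (k - 2 * b) * Hser ^ b)

/-- The normalized Eisenstein series `E_k = 1 - (2k/B_k) ∑ σ_{k-1}(n) qⁿ`. -/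
def Ek (k : ℕ) : PowerSeries ℚ :=
  1 - PowerSeries.C (2 * k / bernoulli k) *
    PowerSeries.mk fun n => ∑ d ∈ n.divisors, (d : ℚ) ^ (k - 1)

/-- `R(f) = (Θf - (k/12)E₂f)E_{ℓ-1} + (k/12)E_{ℓ+1}f` for `f` of weight `k`. -/
def Rop (ℓ k : ℕ) (f : PowerSeries ℚ) : PowerSeries ℚ :=
  (Th f - ((k : ℚ) / 12) • (Ek 2 * f)) * Ek (ℓ - 1) + ((k : ℚ) / 12) • (Ek (ℓ + 1) * f)

/-- `R_i^f`, of weight `k + i(ℓ+1)`. -/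
def Rit (ℓ k : ℕ) (f : PowerSeries ℚ) : ℕ → PowerSeries ℚ
  | 0 => f
  | i + 1 => Rop ℓ (k + i * (ℓ + 1)) (Rit ℓ k f i)

/-- The `ℤ_(ℓ)`-module `V^m̄ ⊆ M_{2k}`. -/
def VmZ (ℓ minf m0 mh k : ℕ) : Set (PowerSeries ℚ) :=
  {f | ∃ c : ℕ → ℚ, (∀ i, inZl ℓ (c i)) ∧
    f = ∑ i ∈ range (k - m0 - minf - mh + 1),
      c i • (Eser ^ (k - minf - mh - i) * Fser ^ (minf + i) * Gser ^ mh)}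

/-- The `ℤ_(ℓ)`-module `W_∞^m̄ ⊆ M_{2k}`. -/
def WinfZ (ℓ minf k : ℕ) : Set (PowerSeries ℚ) :=
  {f | ∃ c : ℕ → ℚ, (∀ i, inZl ℓ (c i)) ∧
    f = ∑ i ∈ range minf, c i • (Eser ^ (k - i) * Fser ^ i)}

/-- The `ℤ_(ℓ)`-module `W_0^m̄ ⊆ M_{2k}`. -/
def W0Z (ℓ m0 k : ℕ) : Set (PowerSeries ℚ) :=
  {f | ∃ c : ℕ → ℚ, (∀ i, inZl ℓ (c i)) ∧
    f = ∑ i ∈ range m0, c i • (Eser ^ i * Fser ^ (k - i))}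

/-- The `ℤ_(ℓ)`-module `W_{1/2}^m̄ ⊆ M_{2k}`. -/
def WhalfZ (ℓ m0 mh k : ℕ) : Set (PowerSeries ℚ) :=
  {f | ∃ c : ℕ → ℚ, (∀ i, inZl ℓ (c i)) ∧
    f = ∑ i ∈ range mh, c i • (Eser ^ m0 * Fser ^ (k - m0 - i) * Gser ^ i)}

/-- `f ∈ M_k` vanishes only at the cusps: by the valence formula,
`ord₀ f + ord_{1/2} f + ord_∞ f = k/2` (equality iff no zeros in the upper half
plane), stated here with denominators cleared (cusp `0` in `t = q^{1/4}`-units,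
cusp `1/2` in `u = q^{1/2}`-units, cusp `∞` in `q`-units). -/
def VOAC (k : ℕ) (f : PowerSeries ℚ) : Prop :=
  2 * PowerSeries.order (atZero k f) + PowerSeries.order (atHalf k f)
    + 2 * PowerSeries.order f = (k : ℕ∞)

/-!
Reduce the coordinates of `f` in the basis `(θ₀²)^(K-2b) F^b` modulo `ℓ` to a polynomial
`p ∈ 𝔽_ℓ[Y]` of degree at most `K/2`. At each cusp `f̄` is then `∑_b p_b A^(K-2b) B^b`, where
`A, B` are the local expansions of `θ₀², F`. At `∞`, `A` is a unit and `B` has a simple zero,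
so `ord_∞ f̄` is the lowest degree of `p`; at `1/2` the roles are swapped and the order is
`K - 2 deg p`. At `0` both are units and `f̄ = A^K p(B/A²)`, where `B/A² - c` has a simple zero
for the constant `c = (B/A²)(0) ≠ 0` (this is where `ℓ ≠ 2` enters), so `ord₀ f̄` is the
multiplicity of the root `c` of `p`. That multiplicity and the lowest degree add up to at most
`deg p`, hence `2 ord₀ f̄ + 2 ord_∞ f̄ + 2 ord_{1/2} f̄ ≤ K` unless `p = 0`, i.e. `f̄ = 0`.
-/

end Paper

theorem Multiset.count_add_count_le_card {α : Type*} [DecidableEq α] {a b : α} (hab : a ≠ b)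
    (s : Multiset α) : s.count a + s.count b ≤ Multiset.card s := by
  induction s using Multiset.induction_on with
  | empty => simp
  | cons x s ih =>
    simp only [Multiset.count_cons, Multiset.card_cons]
    split_ifs with ha hb hb
    · exact absurd (ha.trans hb.symm) hab
    all_goals omega

open Polynomial in
theorem Polynomial.rootMultiplicity_zero_add_rootMultiplicity_le {R : Type*} [CommRing R]
    [IsDomain R] {p : R[X]} {a : R} (ha : a ≠ 0) :
    p.rootMultiplicity 0 + p.rootMultiplicity a ≤ p.natDegree := by
  classical
  rw [← count_roots, ← count_roots]
  exact (Multiset.count_add_count_le_card ha.symm _).trans (card_roots' p)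

namespace PowerSeries

theorem order_sum_eq_of_lt {R ι : Type*} [Semiring R] {s : Finset ι} {g : ι → R⟦X⟧} {j : ι} {n : ℕ}
    (hj : j ∈ s) (hgj : (g j).order = n) (hlt : ∀ i ∈ s, i ≠ j → (n : ℕ∞) < (g i).order) :
    (∑ i ∈ s, g i).order = n := by
  rw [order_eq_nat] at hgj ⊢
  refine ⟨?_, fun m hm => ?_⟩
  · rw [map_sum, sum_eq_single_of_mem j hj fun i hi hij => coeff_of_lt_order _ (hlt i hi hij)]
    exact hgj.1
  · rw [map_sum]
    refine sum_eq_zero fun i hi => ?_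
    by_cases hij : i = j
    · exact hij ▸ hgj.2 m hm
    · exact coeff_of_lt_order _ ((Nat.cast_lt.mpr hm).trans (hlt i hi hij))

theorem order_eq_one_of_constantCoeff_eq_zero {R : Type*} [Semiring R] {f : R⟦X⟧}
    (h₀ : constantCoeff f = 0) (h₁ : coeff 1 f ≠ 0) : f.order = 1 := by
  rw [show (1 : ℕ∞) = (1 : ℕ) from rfl, order_eq_nat]
  refine ⟨h₁, fun i hi => ?_⟩
  obtain rfl : i = 0 := by omega
  rwa [coeff_zero_eq_constantCoeff_apply]

theorem map_invOfUnit {R S : Type*} [Ring R] [Ring S] (φ : R →+* S) (f : R⟦X⟧) (u : Rˣ) :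
    map φ (invOfUnit f u) = invOfUnit (map φ f) (Units.map φ u) := by
  ext n
  induction n using Nat.strongRecOn with
  | ind n ih =>
    rw [coeff_map, coeff_invOfUnit, coeff_invOfUnit]
    split_ifs
    · simp
    · simp only [map_mul, map_neg, map_sum, Units.coe_map_inv, MonoidHom.coe_coe]
      congr 1
      refine sum_congr rfl fun x _ => ?_
      split_ifs with hx
      · rw [map_mul, coeff_map, ← ih _ hx, coeff_map]
      · exact map_zero φ

theorem coeff_mul_pow_of_constantCoeff_eq_zero {R : Type*} [CommSemiring R] {f : R⟦X⟧}
    (hf : constantCoeff f = 0) (g : R⟦X⟧) (n : ℕ) :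
    coeff n (g * f ^ n) = constantCoeff g * coeff 1 f ^ n := by
  obtain ⟨h, rfl⟩ := X_dvd_iff.2 hf
  rw [mul_pow, mul_left_comm, coeff_X_pow_mul', if_pos le_rfl, Nat.sub_self]
  simp [coeff_succ_X_mul]

section Field

variable {k : Type*} [Field k]

theorem order_eq_zero_of_constantCoeff_ne_zero {f : k⟦X⟧} (hf : constantCoeff f ≠ 0) :
    f.order = 0 :=
  order_zero_of_unit (isUnit_iff_constantCoeff.2 hf.isUnit)

theorem order_smul_of_ne_zero {c : k} (hc : c ≠ 0) (f : k⟦X⟧) : (c • f).order = f.order := by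
  rw [smul_eq_C_mul, order_mul, order_eq_zero_of_constantCoeff_ne_zero (by simpa using hc),
    zero_add]

theorem pow_two_mul_mul_inv {A : k⟦X⟧} (hA : constantCoeff A ≠ 0) (B : k⟦X⟧) :
    A ^ 2 * (B * (A ^ 2)⁻¹) = B := by
  rw [mul_left_comm, PowerSeries.mul_inv_cancel _ (by simpa using hA), mul_one]

open Polynomial in
theorem order_aeval_of_order_eq_one {s : k⟦X⟧} (hs : s.order = 1) {Q : k[X]} (hQ : Q ≠ 0) :
    (Polynomial.aeval s Q).order = Q.natTrailingDegree := by
  have hterm : ∀ i, Q.coeff i ≠ 0 → (Q.coeff i • s ^ i).order = i := fun i hi => by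
    rw [order_smul_of_ne_zero hi, order_pow, hs, nsmul_one]
  rw [aeval_eq_sum_range]
  refine order_sum_eq_of_lt (mem_range.2 (Nat.lt_succ_of_le (natTrailingDegree_le_natDegree Q)))
    (hterm _ (trailingCoeff_nonzero_iff_nonzero.2 hQ)) fun i _ hij => ?_
  by_cases hi : Q.coeff i = 0
  · simp [hi]
  · rw [hterm i hi, Nat.cast_lt]
    exact (natTrailingDegree_le_of_ne_zero hi).lt_of_ne' hij

end Field

end PowerSeries

namespace Paper

section Isobaric

variable {R : Type*} [CommRing R]

/-- A form of weight `K` in `A` of weight 1 and `B` of weight 2. -/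
def isobaricSum (K : ℕ) (c : ℕ → R) (A B : R⟦X⟧) : R⟦X⟧ :=
  ∑ b ∈ range (K / 2 + 1), c b • (A ^ (K - 2 * b) * B ^ b)

theorem map_isobaricSum {S : Type*} [CommRing S] (φ : R →+* S) (K : ℕ) (c : ℕ → R)
    (A B : R⟦X⟧) :
    map φ (isobaricSum K c A B) = isobaricSum K (φ ∘ c) (map φ A) (map φ B) := by
  simp [isobaricSum, smul_eq_C_mul]

theorem isobaricSum_congr {K : ℕ} {c c' : ℕ → R} (h : ∀ b ≤ K / 2, c b = c' b) (A B : R⟦X⟧) :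
    isobaricSum K c A B = isobaricSum K c' A B :=
  sum_congr rfl fun b hb => by rw [h b (Nat.lt_succ_iff.1 (mem_range.1 hb))]

variable {k : Type*} [Field k] {K : ℕ} {p : Polynomial k} {A B : k⟦X⟧}

theorem isobaricSum_eq_mul_aeval (hpK : p.natDegree ≤ K / 2) (hA : constantCoeff A ≠ 0)
    (B : k⟦X⟧) :
    isobaricSum K p.coeff A B = A ^ K * Polynomial.aeval (B * (A ^ 2)⁻¹) p := by
  rw [Polynomial.aeval_eq_sum_range' (Nat.lt_succ_of_le hpK), mul_sum]
  refine sum_congr rfl fun b hb => ?_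
  have h2b : 2 * b ≤ K := by have := mem_range.1 hb; omega
  rw [mul_smul_comm]
  congr 1
  calc A ^ (K - 2 * b) * B ^ b = A ^ (K - 2 * b) * (A ^ 2 * (B * (A ^ 2)⁻¹)) ^ b := by
        rw [pow_two_mul_mul_inv hA]
    _ = A ^ (K - 2 * b + 2 * b) * (B * (A ^ 2)⁻¹) ^ b := by ring
    _ = A ^ K * (B * (A ^ 2)⁻¹) ^ b := by rw [Nat.sub_add_cancel h2b]

theorem order_isobaricSum_of_order_eq_one_right (hp : p ≠ 0) (hpK : p.natDegree ≤ K / 2)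
    (hA : constantCoeff A ≠ 0) (hB : B.order = 1) :
    (isobaricSum K p.coeff A B).order = p.natTrailingDegree := by
  have hA0 := order_eq_zero_of_constantCoeff_ne_zero hA
  have hw : (B * (A ^ 2)⁻¹).order = 1 := by
    have := congrArg order (pow_two_mul_mul_inv hA B)
    rwa [order_mul, order_pow, hA0, hB, smul_zero, zero_add] at this
  rw [isobaricSum_eq_mul_aeval hpK hA, order_mul, order_pow, hA0,
    order_aeval_of_order_eq_one hw hp]
  simp

theorem order_isobaricSum_of_order_eq_one_left (hp : p ≠ 0) (hpK : p.natDegree ≤ K / 2)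
    (hA : A.order = 1) (hB : constantCoeff B ≠ 0) :
    (isobaricSum K p.coeff A B).order = (K - 2 * p.natDegree : ℕ) := by
  have hterm : ∀ b, p.coeff b ≠ 0 →
      (p.coeff b • (A ^ (K - 2 * b) * B ^ b)).order = (K - 2 * b : ℕ) := fun b hb => by
    rw [order_smul_of_ne_zero hb, order_mul, order_pow, order_pow, hA,
      order_eq_zero_of_constantCoeff_ne_zero hB]
    simp
  refine order_sum_eq_of_lt (mem_range.2 (Nat.lt_succ_of_le hpK))
    (hterm _ (Polynomial.leadingCoeff_ne_zero.2 hp)) fun b hb hbd => ?_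
  by_cases hcb : p.coeff b = 0
  · rw [hcb, zero_smul, order_zero]
    exact ENat.natCast_lt_top _
  · rw [hterm b hcb, Nat.cast_lt]
    have := (Polynomial.le_natDegree_of_ne_zero hcb).lt_of_ne hbd
    omega

theorem order_isobaricSum_le (hp : p ≠ 0) (hpK : p.natDegree ≤ K / 2)
    (hA : constantCoeff A ≠ 0) (hB : constantCoeff B ≠ 0)
    (hAB : constantCoeff A * coeff 1 B ≠ 2 * coeff 1 A * constantCoeff B) :
    (isobaricSum K p.coeff A B).order ≤ (p.natDegree - p.natTrailingDegree : ℕ) := by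
  rw [isobaricSum_eq_mul_aeval hpK hA, order_mul, order_pow,
    order_eq_zero_of_constantCoeff_ne_zero hA, smul_zero, zero_add]
  have hw := pow_two_mul_mul_inv hA B
  -- expanding `p` at `a = w(0) ≠ 0`, the order of `p(w)` is the multiplicity of the root `a`
  generalize B * (A ^ 2)⁻¹ = w at hw ⊢
  set a := constantCoeff w
  have ha₀ : constantCoeff A ^ 2 * a = constantCoeff B := by
    simpa using congrArg constantCoeff hw
  have ha₁ : constantCoeff A ^ 2 * coeff 1 w + 2 * constantCoeff A * coeff 1 A * a
      = coeff 1 B := by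
    have := congrArg (coeff 1) hw
    rw [coeff_one_mul, pow_two, coeff_one_mul] at this
    simp only [map_mul] at this
    linear_combination this
  have ha : a ≠ 0 := by
    rintro h
    exact hB (by rw [← ha₀, h, mul_zero])
  have hs : (w - C a).order = 1 := by
    refine order_eq_one_of_constantCoeff_eq_zero (by simp [a]) fun hw₁ => hAB ?_
    simp only [map_sub, coeff_C, one_ne_zero, if_false, sub_zero] at hw₁
    linear_combination
      constantCoeff A ^ 3 * hw₁ + 2 * coeff 1 A * ha₀ - constantCoeff A * ha₁
  rw [show w = Polynomial.aeval (w - C a) (Polynomial.X + Polynomial.C a) by simp,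
    ← Polynomial.aeval_comp, order_aeval_of_order_eq_one hs
      (fun h => hp (Polynomial.comp_X_add_C_eq_zero_iff.1 h)),
    ← Polynomial.rootMultiplicity_eq_natTrailingDegree, Nat.cast_le,
    ← Polynomial.rootMultiplicity_eq_natTrailingDegree']
  have := Polynomial.rootMultiplicity_zero_add_rootMultiplicity_le (p := p) ha
  omega

theorem isobaricSum_valence_le (hp : p ≠ 0) (hpK : p.natDegree ≤ K / 2) {Az Bz Ai Bi Ah Bh : k⟦X⟧}
    (hAz : constantCoeff Az ≠ 0) (hBz : constantCoeff Bz ≠ 0)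
    (hABz : constantCoeff Az * coeff 1 Bz ≠ 2 * coeff 1 Az * constantCoeff Bz)
    (hAi : constantCoeff Ai ≠ 0) (hBi : Bi.order = 1)
    (hAh : Ah.order = 1) (hBh : constantCoeff Bh ≠ 0) :
    2 * (isobaricSum K p.coeff Az Bz).order + 2 * (isobaricSum K p.coeff Ai Bi).order
      + (isobaricSum K p.coeff Ah Bh).order ≤ K := by
  rw [order_isobaricSum_of_order_eq_one_right hp hpK hAi hBi,
    order_isobaricSum_of_order_eq_one_left hp hpK hAh hBh]
  calc _ ≤ 2 * ((p.natDegree - p.natTrailingDegree : ℕ) : ℕ∞) + 2 * (p.natTrailingDegree : ℕ∞)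
        + ((K - 2 * p.natDegree : ℕ) : ℕ∞) := by
        gcongr
        exact order_isobaricSum_le hp hpK hAz hBz hABz
    _ = K := by
        have := p.natTrailingDegree_le_natDegree
        norm_cast
        omega

end Isobaric

theorem inZl_iff_natCast_den_ne_zero {ℓ : ℕ} {x : ℚ} : inZl ℓ x ↔ (x.den : ZMod ℓ) ≠ 0 := by
  rw [Ne, ZMod.natCast_eq_zero_iff]
  rfl

theorem coeff_redS {ℓ : ℕ} (f : ℚ⟦X⟧) (n : ℕ) : coeff n (redS ℓ f) = red ℓ (coeff n f) := by
  rw [redS, coeff_mk]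

theorem constantCoeff_redS {ℓ : ℕ} (f : ℚ⟦X⟧) :
    constantCoeff (redS ℓ f) = red ℓ (constantCoeff f) := by
  rw [← coeff_zero_eq_constantCoeff_apply, coeff_redS, coeff_zero_eq_constantCoeff_apply]

section Reduction

variable (ℓ : ℕ) [Fact ℓ.Prime]

def zlSubring : Subring ℚ where
  carrier := {x | inZl ℓ x}
  mul_mem' {x y} hx hy h :=
    ((Fact.out : ℓ.Prime).dvd_mul.1 (h.trans (Rat.mul_den_dvd x y))).elim hx hy
  add_mem' {x y} hx hy h :=
    ((Fact.out : ℓ.Prime).dvd_mul.1 (h.trans (Rat.add_den_dvd x y))).elim hx hy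
  one_mem' := (Fact.out : ℓ.Prime).not_dvd_one
  zero_mem' := (Fact.out : ℓ.Prime).not_dvd_one
  neg_mem' {x} hx := by simpa [inZl] using hx

theorem mem_zlSubring {x : ℚ} : x ∈ zlSubring ℓ ↔ inZl ℓ x := Iff.rfl

def zlReduction : zlSubring ℓ →+* ZMod ℓ where
  toFun x := ((x : ℚ) : ZMod ℓ)
  map_one' := by simp
  map_mul' x y := Rat.cast_mul_of_ne_zero (inZl_iff_natCast_den_ne_zero.1 x.2)
    (inZl_iff_natCast_den_ne_zero.1 y.2)
  map_zero' := by simp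
  map_add' x y := Rat.cast_add_of_ne_zero (inZl_iff_natCast_den_ne_zero.1 x.2)
    (inZl_iff_natCast_den_ne_zero.1 y.2)

theorem red_eq_ratCast (x : ℚ) : red ℓ x = x := by
  rw [red, Rat.cast_def, div_eq_mul_inv]

def zlSeriesSubring : Subring ℚ⟦X⟧ := (map (zlSubring ℓ).subtype).range

theorem zlSeries_iff_mem {f : ℚ⟦X⟧} : ZlSeries ℓ f ↔ f ∈ zlSeriesSubring ℓ := by
  refine ⟨fun hf => ⟨mk fun n => ⟨coeff n f, hf n⟩, by ext; simp⟩, ?_⟩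
  rintro ⟨g, rfl⟩ n
  rw [coeff_map]
  exact (coeff n g).2

theorem redS_map_subtype (g : (zlSubring ℓ)⟦X⟧) :
    redS ℓ (map (zlSubring ℓ).subtype g) = map (zlReduction ℓ) g := by
  ext n
  simp [redS, red_eq_ratCast, zlReduction]

variable {ℓ}

theorem order_redS_eq_one {f : ℚ⟦X⟧} (h₀ : constantCoeff f = 0) (h₁ : coeff 1 f = 1) :
    (redS ℓ f).order = 1 :=
  order_eq_one_of_constantCoeff_eq_zero (by simp [constantCoeff_redS, h₀, red_eq_ratCast])
    (by simp [coeff_redS, h₁, red_eq_ratCast])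

theorem constantCoeff_redS_ne_zero {f : ℚ⟦X⟧} (h : constantCoeff f = 1) :
    constantCoeff (redS ℓ f) ≠ 0 := by
  simp [constantCoeff_redS, h, red_eq_ratCast]

theorem redS_isobaricSum (K : ℕ) {c : ℕ → ℚ} (hc : ∀ b, inZl ℓ (c b)) {A B : ℚ⟦X⟧}
    (hA : ZlSeries ℓ A) (hB : ZlSeries ℓ B) :
    redS ℓ (isobaricSum K c A B)
      = isobaricSum K (fun b => red ℓ (c b)) (redS ℓ A) (redS ℓ B) := by
  obtain ⟨A, rfl⟩ := (zlSeries_iff_mem ℓ).1 hA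
  obtain ⟨B, rfl⟩ := (zlSeries_iff_mem ℓ).1 hB
  have hlift : isobaricSum K c (map (zlSubring ℓ).subtype A) (map (zlSubring ℓ).subtype B)
      = map (zlSubring ℓ).subtype (isobaricSum K (fun b => ⟨c b, hc b⟩) A B) := by
    rw [map_isobaricSum]
    rfl
  rw [hlift, redS_map_subtype, redS_map_subtype, redS_map_subtype, map_isobaricSum]
  simp [Function.comp_def, zlReduction, red_eq_ratCast]

end Reduction

section Series

variable (ℓ : ℕ) [Fact ℓ.Prime]

theorem inZl_natCast (n : ℕ) : inZl ℓ n := natCast_mem (zlSubring ℓ) n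

theorem X_mem_zlSeriesSubring : (X : ℚ⟦X⟧) ∈ zlSeriesSubring ℓ := ⟨X, map_X _⟩

theorem smul_mem_zlSeriesSubring {c : ℚ} (hc : inZl ℓ c) {f : ℚ⟦X⟧}
    (hf : f ∈ zlSeriesSubring ℓ) : c • f ∈ zlSeriesSubring ℓ := by
  rw [smul_eq_C_mul]
  exact mul_mem ⟨C ⟨c, hc⟩, map_C _ _⟩ hf

theorem theta0_mem_zlSeriesSubring : theta0 ∈ zlSeriesSubring ℓ := by
  refine (zlSeries_iff_mem ℓ).1 fun n => ?_
  rw [theta0, coeff_mk]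
  split_ifs
  exacts [mod_cast inZl_natCast ℓ 1, mod_cast inZl_natCast ℓ 2, mod_cast inZl_natCast ℓ 0]

theorem theta0sq_mem_zlSeriesSubring : theta0sq ∈ zlSeriesSubring ℓ :=
  pow_mem (theta0_mem_zlSeriesSubring ℓ) 2

theorem Fser_mem_zlSeriesSubring : Fser ∈ zlSeriesSubring ℓ := by
  refine (zlSeries_iff_mem ℓ).1 fun n => ?_
  rw [Fser, coeff_mk]
  split_ifs
  · rw [← Nat.cast_sum]
    exact inZl_natCast ℓ _
  · exact mod_cast inZl_natCast ℓ 0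

theorem thetaHalf_mem_zlSeriesSubring : thetaHalf ∈ zlSeriesSubring ℓ := by
  refine mul_mem (X_mem_zlSeriesSubring ℓ) (pow_mem ((zlSeries_iff_mem ℓ).1 fun n => ?_) 4)
  rw [psiSum, coeff_mk]
  exact inZl_natCast ℓ _

theorem FHalf_mem_zlSeriesSubring : FHalf ∈ zlSeriesSubring ℓ := by
  refine (zlSeries_iff_mem ℓ).1 fun n => ?_
  rw [FHalf, expand2, coeff_mk]
  split_ifs
  exacts [(zlSeries_iff_mem ℓ).2 (pow_mem (theta0_mem_zlSeriesSubring ℓ) 4) _,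
    mod_cast inZl_natCast ℓ 0]

theorem invU_mem_zlSeriesSubring (m : ℕ) : invU m ∈ zlSeriesSubring ℓ :=
  ⟨invOfUnit (1 - X ^ m) 1, by simp [invU, map_invOfUnit]⟩

theorem Hser_mem_zlSeriesSubring : Hser ∈ zlSeriesSubring ℓ := by
  refine (zlSeries_iff_mem ℓ).1 fun n => ?_
  rw [Hser, coeff_mk]
  refine (zlSeries_iff_mem ℓ).2 (prod_mem fun m _ => mul_mem ?_ ?_) n
  · exact pow_mem (sub_mem (one_mem _) (pow_mem (X_mem_zlSeriesSubring ℓ) m)) 8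
  · exact pow_mem (invU_mem_zlSeriesSubring ℓ _) 4

end Series

theorem constantCoeff_theta0 : constantCoeff theta0 = 1 := by
  simp [theta0]

theorem constantCoeff_theta0sq : constantCoeff theta0sq = 1 := by
  simp [theta0sq, constantCoeff_theta0]

theorem coeff_one_theta0sq : coeff 1 theta0sq = 4 := by
  rw [theta0sq, coeff_one_pow, constantCoeff_theta0]
  norm_num [theta0]

theorem constantCoeff_Fser : constantCoeff Fser = 0 := by
  simp [Fser]

theorem coeff_one_Fser : coeff 1 Fser = 1 := by
  simp [Fser]

theorem constantCoeff_thetaHalf : constantCoeff thetaHalf = 0 := by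
  simp [thetaHalf]

theorem coeff_one_thetaHalf : coeff 1 thetaHalf = 1 := by
  rw [thetaHalf, coeff_succ_X_mul, coeff_zero_eq_constantCoeff, map_pow,
    ← coeff_zero_eq_constantCoeff, psiSum, coeff_mk]
  simp

theorem constantCoeff_FHalf : constantCoeff FHalf = 1 := by
  rw [FHalf, expand2, ← coeff_zero_eq_constantCoeff, coeff_mk, if_pos (dvd_zero 2),
    Nat.zero_div, coeff_zero_eq_constantCoeff, map_pow, constantCoeff_theta0, one_pow]

theorem constantCoeff_Hser : constantCoeff Hser = 1 := by
  simp [Hser]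

theorem constantCoeff_invU (m : ℕ) : constantCoeff (invU m) = 1 := by
  rw [invU, constantCoeff_invOfUnit]
  simp

theorem coeff_one_invU_two : coeff 1 (invU 2) = 0 := by
  have h := congrArg (coeff 1) (invOfUnit_mul (1 - X ^ 2 : ℚ⟦X⟧) 1 (by simp))
  rw [coeff_one_mul, ← invU] at h
  simpa [coeff_X_pow] using h

theorem coeff_one_Hser : coeff 1 Hser = -8 := by
  simp [Hser, coeff_one_mul, coeff_one_pow, constantCoeff_invU, coeff_one_invU_two]

theorem coeff_mu_self (K b : ℕ) : coeff b (mu K b) = 1 := by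
  rw [mu, coeff_mul_pow_of_constantCoeff_eq_zero constantCoeff_Fser, coeff_one_Fser, map_pow,
    constantCoeff_theta0sq, one_pow, one_pow, one_mul]

theorem coeff_mu_of_lt (K : ℕ) {i j : ℕ} (h : i < j) : coeff i (mu K j) = 0 :=
  coeff_mul_of_lt_order ((Nat.cast_lt.2 h).trans_le
    (le_order_pow_of_constantCoeff_eq_zero j constantCoeff_Fser))

theorem isobaricSum_theta0sq_Fser (K : ℕ) (c : ℕ → ℚ) :
    isobaricSum K c theta0sq Fser = ∑ b ∈ range (K / 2 + 1), c b • mu K b := rfl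

theorem coords_eq (K : ℕ) (f : ℚ⟦X⟧) (b : ℕ) :
    coords K f b = coeff b (f - ∑ j ∈ range b, coords K f j • mu K j) := by
  rw [coords, Nat.strongRecOn_eq, ← sum_attach (range b) (fun j => coords K f j • mu K j)]
  rfl

theorem coords_isobaricSum (K : ℕ) (c : ℕ → ℚ) {b : ℕ} (hb : b ≤ K / 2) :
    coords K (isobaricSum K c theta0sq Fser) b = c b := by
  induction b using Nat.strongRecOn with
  | ind b ih =>
    rw [coords_eq, sum_congr rfl fun j hj => by rw [ih j (mem_range.1 hj) (by grind)],
      isobaricSum_theta0sq_Fser, ← sum_range_add_sum_Ico _ (by omega : b ≤ K / 2 + 1),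
      add_sub_cancel_left, map_sum, sum_eq_single_of_mem b (left_mem_Ico.2 (by omega))]
    · rw [coeff_smul, coeff_mu_self, smul_eq_mul, mul_one]
    · intro j hj hjb
      rw [coeff_smul, coeff_mu_of_lt K ((mem_Ico.1 hj).1.lt_of_ne' hjb), smul_zero]

theorem eq_isobaricSum_coords {K : ℕ} {f : ℚ⟦X⟧} (hf : f ∈ Mk K) :
    f = isobaricSum K (coords K f) theta0sq Fser := by
  obtain ⟨c, rfl⟩ := hf
  rw [← isobaricSum_theta0sq_Fser]
  exact isobaricSum_congr (fun b hb => (coords_isobaricSum K c hb).symm) _ _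

theorem inZl_coords {ℓ : ℕ} [Fact ℓ.Prime] {f : ℚ⟦X⟧} (hf : ZlSeries ℓ f) (K b : ℕ) :
    inZl ℓ (coords K f b) := by
  induction b using Nat.strongRecOn with
  | ind b ih =>
    rw [coords_eq]
    refine (zlSeries_iff_mem ℓ).2 (sub_mem ((zlSeries_iff_mem ℓ).1 hf)
      (sum_mem fun j hj => smul_mem_zlSeriesSubring ℓ (ih j (mem_range.1 hj)) ?_)) b
    exact mul_mem (pow_mem (theta0sq_mem_zlSeriesSubring ℓ) _)
      (pow_mem (Fser_mem_zlSeriesSubring ℓ) _)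

section Main

variable {ℓ : ℕ} [Fact ℓ.Prime]

variable (ℓ) in
def coordsPoly (K : ℕ) (f : ℚ⟦X⟧) : Polynomial (ZMod ℓ) :=
  ∑ b ∈ range (K / 2 + 1), Polynomial.monomial b (red ℓ (coords K f b))

theorem coeff_coordsPoly {K b : ℕ} (f : ℚ⟦X⟧) (hb : b ≤ K / 2) :
    (coordsPoly ℓ K f).coeff b = red ℓ (coords K f b) := by
  simp [coordsPoly, Polynomial.coeff_monomial, Nat.lt_succ_iff.2 hb]

theorem natDegree_coordsPoly_le (K : ℕ) (f : ℚ⟦X⟧) : (coordsPoly ℓ K f).natDegree ≤ K / 2 :=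
  Polynomial.natDegree_sum_le_of_forall_le _ _ fun _ hb =>
    (Polynomial.natDegree_monomial_le _).trans (Nat.lt_succ_iff.1 (mem_range.1 hb))

theorem redS_isobaricSum_coords {K : ℕ} {f : ℚ⟦X⟧} (hf : ZlSeries ℓ f) {A B : ℚ⟦X⟧}
    (hA : A ∈ zlSeriesSubring ℓ) (hB : B ∈ zlSeriesSubring ℓ) :
    redS ℓ (isobaricSum K (coords K f) A B)
      = isobaricSum K (coordsPoly ℓ K f).coeff (redS ℓ A) (redS ℓ B) := by
  rw [redS_isobaricSum K (inZl_coords hf K) ((zlSeries_iff_mem ℓ).2 hA)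
    ((zlSeries_iff_mem ℓ).2 hB)]
  exact isobaricSum_congr (fun b hb => (coeff_coordsPoly f hb).symm) _ _

theorem atZero_eq_isobaricSum (K : ℕ) (f : ℚ⟦X⟧) :
    atZero K f = isobaricSum K (coords K f) ((-1 / 2 : ℚ) • theta0sq) ((1 / 64 : ℚ) • Hser) :=
  sum_congr rfl fun b _ => by rw [smul_pow, smul_pow, smul_mul_smul_comm, smul_smul, mul_assoc]

theorem inZl_inv_two_pow (h2 : (2 : ZMod ℓ) ≠ 0) (e : ℕ) : inZl ℓ ((2 : ℚ) ^ e)⁻¹ := by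
  rw [show (2 : ℚ) ^ e = ((2 ^ e : ℕ) : ℚ) by push_cast; rfl, inZl_iff_natCast_den_ne_zero,
    Rat.inv_natCast_den_of_pos (by positivity)]
  exact_mod_cast pow_ne_zero e h2

theorem redS_eq_isobaricSum_coordsPoly {K : ℕ} {f : ℚ⟦X⟧} (hf : f ∈ Mk K) (hZ : ZlSeries ℓ f) :
    redS ℓ f = isobaricSum K (coordsPoly ℓ K f).coeff (redS ℓ theta0sq) (redS ℓ Fser) := by
  conv_lhs => rw [eq_isobaricSum_coords hf]
  exact redS_isobaricSum_coords hZ (theta0sq_mem_zlSeriesSubring ℓ) (Fser_mem_zlSeriesSubring ℓ)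

theorem redS_atHalf_eq_isobaricSum_coordsPoly {K : ℕ} {f : ℚ⟦X⟧} (hZ : ZlSeries ℓ f) :
    redS ℓ (atHalf K f)
      = isobaricSum K (coordsPoly ℓ K f).coeff (redS ℓ thetaHalf) (redS ℓ FHalf) :=
  redS_isobaricSum_coords hZ (thetaHalf_mem_zlSeriesSubring ℓ) (FHalf_mem_zlSeriesSubring ℓ)

theorem redS_atZero_eq_isobaricSum_coordsPoly (h2 : (2 : ZMod ℓ) ≠ 0) {K : ℕ} {f : ℚ⟦X⟧}
    (hZ : ZlSeries ℓ f) :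
    redS ℓ (atZero K f) = isobaricSum K (coordsPoly ℓ K f).coeff
      (redS ℓ ((-1 / 2 : ℚ) • theta0sq)) (redS ℓ ((1 / 64 : ℚ) • Hser)) := by
  have h64 : inZl ℓ (1 / 64) := by
    rw [one_div, show (64 : ℚ) = 2 ^ 6 by norm_num]
    exact inZl_inv_two_pow h2 6
  have h12 : inZl ℓ (-1 / 2) := by
    rw [neg_div, one_div]
    exact neg_mem ((mem_zlSubring ℓ).2 (by simpa using inZl_inv_two_pow h2 1))
  rw [atZero_eq_isobaricSum]
  exact redS_isobaricSum_coords hZ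
    (smul_mem_zlSeriesSubring ℓ h12 (theta0sq_mem_zlSeriesSubring ℓ))
    (smul_mem_zlSeriesSubring ℓ h64 (Hser_mem_zlSeriesSubring ℓ))

theorem zeroCusp_conditions (h2 : (2 : ZMod ℓ) ≠ 0) :
    constantCoeff (redS ℓ ((-1 / 2 : ℚ) • theta0sq)) ≠ 0 ∧
    constantCoeff (redS ℓ ((1 / 64 : ℚ) • Hser)) ≠ 0 ∧
    constantCoeff (redS ℓ ((-1 / 2 : ℚ) • theta0sq)) * coeff 1 (redS ℓ ((1 / 64 : ℚ) • Hser))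
      ≠ 2 * coeff 1 (redS ℓ ((-1 / 2 : ℚ) • theta0sq))
        * constantCoeff (redS ℓ ((1 / 64 : ℚ) • Hser)) := by
  have h8 : (8 : ZMod ℓ) ≠ 0 := by
    rw [show (8 : ZMod ℓ) = 2 ^ 3 by norm_num]
    exact pow_ne_zero 3 h2
  have h64 : (64 : ZMod ℓ) ≠ 0 := by
    rw [show (64 : ZMod ℓ) = 2 ^ 6 by norm_num]
    exact pow_ne_zero 6 h2
  -- the four coefficients are `-1/2`, `-2`, `1/64`, `-1/8`, and `1/16 ≠ -1/16` as `2 ≠ 0`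
  simp only [constantCoeff_redS, coeff_redS, constantCoeff_smul, coeff_smul,
    constantCoeff_theta0sq, coeff_one_theta0sq, constantCoeff_Hser, coeff_one_Hser,
    red_eq_ratCast, smul_eq_mul]
  norm_num
  rw [Rat.cast_div_of_ne_zero, Rat.cast_div_of_ne_zero, Rat.cast_div_of_ne_zero] <;>
    simp [h2, h8, h64]
  field_simp
  intro h
  exact pow_ne_zero 7 h2 (by linear_combination h)

theorem redS_eq_zero_of_lt_valence (hℓ : ℓ ≠ 2) {K : ℕ} {f : ℚ⟦X⟧} (hf : f ∈ Mk K)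
    (hZ : ZlSeries ℓ f)
    (hlt : (K : ℕ∞) < 2 * (redS ℓ (atZero K f)).order + 2 * (redS ℓ f).order
      + (redS ℓ (atHalf K f)).order) :
    redS ℓ f = 0 ∧ redS ℓ (atZero K f) = 0 ∧ redS ℓ (atHalf K f) = 0 := by
  have h2 : (2 : ZMod ℓ) ≠ 0 := Ring.two_ne_zero (by rwa [ZMod.ringChar_zmod_n])
  rw [redS_atZero_eq_isobaricSum_coordsPoly h2 hZ, redS_eq_isobaricSum_coordsPoly hf hZ,
    redS_atHalf_eq_isobaricSum_coordsPoly hZ] at hlt ⊢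
  by_cases hp : coordsPoly ℓ K f = 0
  · simp [hp, isobaricSum]
  obtain ⟨hAz, hBz, hABz⟩ := zeroCusp_conditions h2
  exact absurd (isobaricSum_valence_le hp (natDegree_coordsPoly_le K f) hAz hBz hABz
    (constantCoeff_redS_ne_zero constantCoeff_theta0sq)
    (order_redS_eq_one constantCoeff_Fser coeff_one_Fser)
    (order_redS_eq_one constantCoeff_thetaHalf coeff_one_thetaHalf)
    (constantCoeff_redS_ne_zero constantCoeff_FHalf)) (not_le.2 hlt)

end Main

/-- Corollary 5.2 (Sturm-style bound).  (a) If `f ∈ M_{2k}` and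
`ord₀(f̄) + ord_∞(f̄) + ord_{1/2}(f̄) > k`, then all the orders are `+∞` and
`f̄ = 0`.  (b) If `f ∈ M_{2k+1}` and the sum exceeds `k + 1/2`, the same holds.
Orders: at `∞` in `q`-units, at `0` in `t = q^{1/4}`-units, at `1/2` in
`q`-units (half-integers), so the inequalities are stated with denominators
cleared (doubled, the `1/2`-order being the `u = q^{1/2}`-order divided by 2). -/
theorem sturm_bound (ℓ : ℕ) (hp : ℓ.Prime) (hℓ : 5 ≤ ℓ) (k : ℕ) :
    -- (a)
    ((∀ f ∈ Mk (2 * k), ZlSeries ℓ f →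
      ((2 * k : ℕ) : ℕ∞) <
          2 * PowerSeries.order (redS ℓ (atZero (2 * k) f))
            + 2 * PowerSeries.order (redS ℓ f)
            + PowerSeries.order (redS ℓ (atHalf (2 * k) f)) →
      (redS ℓ f = 0 ∧ PowerSeries.order (redS ℓ f) = ⊤ ∧
        PowerSeries.order (redS ℓ (atZero (2 * k) f)) = ⊤ ∧
        PowerSeries.order (redS ℓ (atHalf (2 * k) f)) = ⊤)) ∧
    -- (b)
    (∀ f ∈ Mk (2 * k + 1), ZlSeries ℓ f →
      ((2 * k + 1 : ℕ) : ℕ∞) <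
          2 * PowerSeries.order (redS ℓ (atZero (2 * k + 1) f))
            + 2 * PowerSeries.order (redS ℓ f)
            + PowerSeries.order (redS ℓ (atHalf (2 * k + 1) f)) →
      (redS ℓ f = 0 ∧ PowerSeries.order (redS ℓ f) = ⊤ ∧
        PowerSeries.order (redS ℓ (atZero (2 * k + 1) f)) = ⊤ ∧
        PowerSeries.order (redS ℓ (atHalf (2 * k + 1) f)) = ⊤))) := by
  have : Fact ℓ.Prime := ⟨hp⟩
  have key : ∀ K, ∀ f ∈ Mk K, ZlSeries ℓ f →
      (K : ℕ∞) < 2 * (redS ℓ (atZero K f)).order + 2 * (redS ℓ f).order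
        + (redS ℓ (atHalf K f)).order →
      redS ℓ f = 0 ∧ (redS ℓ f).order = ⊤ ∧ (redS ℓ (atZero K f)).order = ⊤ ∧
        (redS ℓ (atHalf K f)).order = ⊤ := by
    intro K f hf hZ hlt
    obtain ⟨hInf, hZero, hHalf⟩ := redS_eq_zero_of_lt_valence (by omega) hf hZ hlt
    simp [hInf, hZero, hHalf]
  exact ⟨key (2 * k), key (2 * k + 1)⟩

end Paper
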